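/- arXiv:math/0402249 — 3 statements merged into one kernel-verified Lean document; each statement's English description precedes it below -/
import Mathlib

section
/- If N is a normal subloop of a loop L, then the left multiplication group of the quotient loop L/N is isomorphic to Mlt_ℓ(L)/𝓛(N), where 𝓛(N) = { α ∈ Mlt_ℓ(L) : α(x) ∈ N·x for all x ∈ L }. -/
/-- A loop: a binary operation with two-sided identity whose left and right
translations are bijections. -/
structure LoopStr (L : Type*) where
  mul : L → L → L
  one : L
  one_mul : ∀ x, mul one x = x
  mul_one : ∀ x, mul x one = x
  mul_left_bij : ∀ x, Function.Bijective (mul x)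
  mul_right_bij : ∀ x, Function.Bijective fun y => mul y x

/-- Left translation `λ_x` as a permutation. -/
noncomputable def LoopStr.lam {L : Type*} (S : LoopStr L) (x : L) : Equiv.Perm L :=
  Equiv.ofBijective _ (S.mul_left_bij x)

/-- Right translation `ρ_x` as a permutation. -/
noncomputable def LoopStr.rho {L : Type*} (S : LoopStr L) (x : L) : Equiv.Perm L :=
  Equiv.ofBijective _ (S.mul_right_bij x)

/-- The left multiplication group `Mlt_ℓ(L)`. -/
noncomputable def LoopStr.Mlt {L : Type*} (S : LoopStr L) : Subgroup (Equiv.Perm L) :=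
  Subgroup.closure (Set.range S.lam)

/-- Left division: `ldiv a b` is the unique solution `x` of `a·x = b`. -/
noncomputable def LoopStr.ldiv {L : Type*} (S : LoopStr L) (a b : L) : L := (S.lam a).symm b

/-- Right division: `rdiv a b` is the unique solution `x` of `x·b = a`. -/
noncomputable def LoopStr.rdiv {L : Type*} (S : LoopStr L) (a b : L) : L := (S.rho b).symm a

/-- The inner mapping `δ_{x,y} = λ_{xy}⁻¹ ∘ λ_x ∘ λ_y`. -/
noncomputable def LoopStr.delta {L : Type*} (S : LoopStr L) (x y : L) : Equiv.Perm L :=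
  (S.lam (S.mul x y))⁻¹ * S.lam x * S.lam y

/-- A loop homomorphism: preserves the multiplication and the identity. -/
def IsLoopHom {L L' : Type*} (S : LoopStr L) (S' : LoopStr L') (θ : L → L') : Prop :=
  θ S.one = S'.one ∧ ∀ x y, θ (S.mul x y) = S'.mul (θ x) (θ y)

/-- A subloop: a subset containing the identity, closed under multiplication
and both divisions. -/
def IsSubloop {L : Type*} (S : LoopStr L) (N : Set L) : Prop :=
  S.one ∈ N ∧ (∀ a ∈ N, ∀ b ∈ N, S.mul a b ∈ N) ∧
    (∀ a ∈ N, ∀ b ∈ N, S.ldiv a b ∈ N) ∧ (∀ a ∈ N, ∀ b ∈ N, S.rdiv a b ∈ N)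

/-- A normal subloop: `ab·N = a·(bN) = (aN)·b` for all `a, b`. -/
def IsNormalSubloop {L : Type*} (S : LoopStr L) (N : Set L) : Prop :=
  IsSubloop S N ∧ ∀ a b : L,
    ((fun n => S.mul (S.mul a b) n) '' N = (fun n => S.mul a (S.mul b n)) '' N) ∧
    ((fun n => S.mul (S.mul a b) n) '' N = (fun n => S.mul (S.mul a n) b) '' N)

/-! The map `θ : L → L/N` turns every `α ∈ Mlt_ℓ(L)` into the unique `β` with `θ ∘ α = β ∘ θ`,
because this holds for the generators `λ_a` (with `β = λ_{θ a}`). This gives a surjective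
homomorphism `Mlt_ℓ(L) → Mlt_ℓ(L/N)`, and `α` lies in its kernel iff `θ (α x) = θ x`
for all `x`, i.e. `α x ∈ N·x`. -/

theorem LoopStr.mul_rdiv_cancel {L : Type*} (S : LoopStr L) (u v : L) :
    S.mul (S.rdiv u v) v = u :=
  (S.rho v).apply_symm_apply u

theorem LoopStr.lam_mem_Mlt {L : Type*} (S : LoopStr L) (a : L) : S.lam a ∈ S.Mlt :=
  Subgroup.subset_closure ⟨a, rfl⟩

theorem Equiv.Perm.eq_of_semiconj_of_surjective {α β : Type*} {f : α → β}
    (hf : Function.Surjective f) {ga : α → α} {gb gb' : Equiv.Perm β}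
    (h : Function.Semiconj f ga gb) (h' : Function.Semiconj f ga gb') : gb = gb' := by
  ext y
  obtain ⟨x, rfl⟩ := hf y
  rw [← h x, h' x]

namespace IsLoopHom

variable {L L' : Type*} {S : LoopStr L} {S' : LoopStr L'} {θ : L → L'}

theorem apply_eq_apply_iff (hθ : IsLoopHom S S' θ) (u v : L) :
    θ u = θ v ↔ ∃ n, θ n = S'.one ∧ u = S.mul n v := by
  constructor
  · intro h
    refine ⟨S.rdiv u v, (S'.mul_right_bij (θ v)).1 ?_, (S.mul_rdiv_cancel u v).symm⟩
    dsimp only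
    rw [← hθ.2, S.mul_rdiv_cancel, h, S'.one_mul]
  · rintro ⟨n, hn, rfl⟩
    rw [hθ.2, hn, S'.one_mul]

theorem semiconj_lam (hθ : IsLoopHom S S' θ) (a : L) :
    Function.Semiconj θ (S.lam a) (S'.lam (θ a)) :=
  fun x => hθ.2 a x

theorem exists_semiconj_of_mem_Mlt (hθ : IsLoopHom S S' θ) {α : Equiv.Perm L}
    (hα : α ∈ S.Mlt) : ∃ β ∈ S'.Mlt, Function.Semiconj θ α β := by
  induction hα using Subgroup.closure_induction with
  | mem _ h =>
    obtain ⟨a, rfl⟩ := h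
    exact ⟨_, S'.lam_mem_Mlt (θ a), hθ.semiconj_lam a⟩
  | one => exact ⟨1, one_mem _, Function.Semiconj.id_right⟩
  | mul _ _ _ _ h₁ h₂ =>
    obtain ⟨β₁, hβ₁, h₁⟩ := h₁
    obtain ⟨β₂, hβ₂, h₂⟩ := h₂
    exact ⟨β₁ * β₂, mul_mem hβ₁ hβ₂, h₁.comp_right h₂⟩
  | inv _ _ h =>
    obtain ⟨β, hβ, h⟩ := h
    exact ⟨β⁻¹, inv_mem hβ, h.inverses_right (Equiv.apply_symm_apply _) (Equiv.symm_apply_apply _)⟩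

noncomputable def mltMap (hθ : IsLoopHom S S' θ) (hsurj : Function.Surjective θ) :
    S.Mlt →* S'.Mlt where
  toFun α := ⟨_, (hθ.exists_semiconj_of_mem_Mlt α.2).choose_spec.1⟩
  map_one' := Subtype.ext <| Equiv.Perm.eq_of_semiconj_of_surjective hsurj
    (hθ.exists_semiconj_of_mem_Mlt (one_mem _)).choose_spec.2 Function.Semiconj.id_right
  map_mul' α₁ α₂ := Subtype.ext <| Equiv.Perm.eq_of_semiconj_of_surjective hsurj
    (hθ.exists_semiconj_of_mem_Mlt (mul_mem α₁.2 α₂.2)).choose_spec.2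
    ((hθ.exists_semiconj_of_mem_Mlt α₁.2).choose_spec.2.comp_right
      (hθ.exists_semiconj_of_mem_Mlt α₂.2).choose_spec.2)

variable (hθ : IsLoopHom S S' θ) (hsurj : Function.Surjective θ)

theorem semiconj_mltMap (α : S.Mlt) : Function.Semiconj θ α (hθ.mltMap hsurj α) :=
  (hθ.exists_semiconj_of_mem_Mlt α.2).choose_spec.2

theorem mltMap_eq_of_semiconj {α : S.Mlt} {β : S'.Mlt}
    (h : Function.Semiconj θ α β) : hθ.mltMap hsurj α = β :=
  Subtype.ext <| Equiv.Perm.eq_of_semiconj_of_surjective hsurj (hθ.semiconj_mltMap hsurj α) h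

theorem mltMap_surjective : Function.Surjective (hθ.mltMap hsurj) := by
  suffices S'.Mlt ≤ (S'.Mlt.subtype.comp (hθ.mltMap hsurj)).range by
    intro β
    obtain ⟨α, hα⟩ := this β.2
    exact ⟨α, Subtype.ext hα⟩
  refine (Subgroup.closure_le _).2 ?_
  rintro _ ⟨a', rfl⟩
  obtain ⟨a, rfl⟩ := hsurj a'
  exact ⟨⟨_, S.lam_mem_Mlt a⟩, congrArg Subtype.val <|
    hθ.mltMap_eq_of_semiconj hsurj (β := ⟨_, S'.lam_mem_Mlt (θ a)⟩) (hθ.semiconj_lam a)⟩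

theorem mem_ker_mltMap_iff (α : S.Mlt) :
    α ∈ (hθ.mltMap hsurj).ker ↔ ∀ x, θ ((α : Equiv.Perm L) x) = θ x := by
  refine ⟨fun h x => ?_, fun h => hθ.mltMap_eq_of_semiconj hsurj (β := 1) h⟩
  rw [hθ.semiconj_mltMap hsurj α x, (MonoidHom.mem_ker).1 h]
  rfl

end IsLoopHom

theorem stmt3_general {L L' : Type*} (S : LoopStr L) (S' : LoopStr L') (N : Set L)
    (θ : L → L') (hθ : IsLoopHom S S' θ)
    (hsurj : Function.Surjective θ) (hker : {x : L | θ x = S'.one} = N)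
    (H : Subgroup ↥S.Mlt) [hHn : H.Normal]
    (hH : ∀ α : ↥S.Mlt, α ∈ H ↔ ∀ x : L, ∃ n ∈ N, (α : Equiv.Perm L) x = S.mul n x) :
    Nonempty ((↥S.Mlt ⧸ H) ≃* ↥S'.Mlt) := by
  have hkerH : (hθ.mltMap hsurj).ker = H := by
    ext α
    simp only [hθ.mem_ker_mltMap_iff hsurj, hH, hθ.apply_eq_apply_iff, ← hker, Set.mem_ofPred_eq]
  exact ⟨(QuotientGroup.quotientMulEquivOfEq hkerH.symm).trans
    (QuotientGroup.quotientKerEquivOfSurjective _ (hθ.mltMap_surjective hsurj))⟩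

/-- If `N` is a normal subloop of `L`, then
`Mlt_ℓ(L/N) ≅ Mlt_ℓ(L)/𝓛(N)`. The quotient loop `L/N` is realized as any
surjective loop homomorphism `θ : L → L'` with kernel `N`. -/
theorem stmt3 {L L' : Type*} (S : LoopStr L) (S' : LoopStr L') (N : Set L)
    (hN : IsNormalSubloop S N) (θ : L → L') (hθ : IsLoopHom S S' θ)
    (hsurj : Function.Surjective θ) (hker : {x : L | θ x = S'.one} = N)
    (H : Subgroup ↥S.Mlt) [hHn : H.Normal]
    (hH : ∀ α : ↥S.Mlt, α ∈ H ↔ ∀ x : L, ∃ n ∈ N, (α : Equiv.Perm L) x = S.mul n x) :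
    Nonempty ((↥S.Mlt ⧸ H) ≃* ↥S'.Mlt) :=
  stmt3_general S S' N θ hθ hsurj hker H (hHn := hHn) hH
end

section
/- Let L_G be the set of positive definite hermitian complex n×n matrices of determinant 1 with the operation A ∘ B defined by the polar decomposition AB = (A ∘ B)·d_{A,B}, d_{A,B} ∈ SU(n). Then (L_G, ∘) satisfies the automorphic inverse property: (A ∘ B)⁻¹ = A⁻¹ ∘ B⁻¹ for all A, B ∈ L_G. -/
open scoped ComplexOrder

/-- The set of positive definite hermitian complex `n × n` matrices of
determinant 1. -/
def LG (n : ℕ) : Set (Matrix (Fin n) (Fin n) ℂ) :=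
  {A | A.PosDef ∧ A.det = 1}

/-- The special unitary group `SU(n)`, as a set of matrices. -/
def SU (n : ℕ) : Set (Matrix (Fin n) (Fin n) ℂ) :=
  {u | u ∈ Matrix.unitaryGroup (Fin n) ℂ ∧ u.det = 1}

/-! Squaring both sides of `AB = (A ∘ B) u` against their adjoints gives `(A ∘ B)² = AB²A`.
Since `A⁻¹B⁻²A⁻¹ = (AB²A)⁻¹`, both `A⁻¹ ∘ B⁻¹` and `(A ∘ B)⁻¹` are positive square roots of
the same matrix, hence equal. -/

theorem IsSelfAdjoint.sq_eq_of_mul_eq_mul_unitary {R : Type*} [Monoid R] [StarMul R]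
    {A B P u : R} (hA : IsSelfAdjoint A) (hB : IsSelfAdjoint B) (hP : IsSelfAdjoint P)
    (hu : u ∈ unitary R) (h : A * B = P * u) : P ^ 2 = A * B ^ 2 * A :=
  calc P ^ 2 = P * u * star (P * u) := by
        rw [star_mul, hP.star_eq, mul_assoc, ← mul_assoc u, Unitary.mul_star_self_of_mem hu,
          one_mul, sq]
    _ = A * B * star (A * B) := by rw [h]
    _ = A * B ^ 2 * A := by rw [star_mul, hA.star_eq, hB.star_eq, sq]; simp only [mul_assoc]

open scoped MatrixOrder in
theorem Matrix.PosSemidef.eq_of_sq_eq_sq {n 𝕜 : Type*} [Fintype n] [DecidableEq n] [RCLike 𝕜]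
    {A B : Matrix n n 𝕜} (hA : A.PosSemidef) (hB : B.PosSemidef) (h : A ^ 2 = B ^ 2) : A = B :=
  (CFC.sq_eq_sq_iff A B hA.nonneg hB.nonneg).mp h

theorem inv_mem_LG {n : ℕ} {A : Matrix (Fin n) (Fin n) ℂ} (hA : A ∈ LG n) : A⁻¹ ∈ LG n :=
  ⟨hA.1.inv, by rw [Matrix.det_nonsing_inv, hA.2, Ring.inverse_one]⟩

/-- The loop `(L_G, ∘)` of positive definite hermitian
determinant-1 matrices (operation from polar decomposition) satisfies the
automorphic inverse property `(A ∘ B)⁻¹ = A⁻¹ ∘ B⁻¹`. -/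
theorem stmt11 (n : ℕ)
    (circ : Matrix (Fin n) (Fin n) ℂ → Matrix (Fin n) (Fin n) ℂ → Matrix (Fin n) (Fin n) ℂ)
    (hcirc : ∀ A ∈ LG n, ∀ B ∈ LG n,
      circ A B ∈ LG n ∧ ∃ u ∈ SU n, A * B = circ A B * u) :
    ∀ A ∈ LG n, ∀ B ∈ LG n, (circ A B)⁻¹ = circ A⁻¹ B⁻¹ := by
  have circ_sq : ∀ A ∈ LG n, ∀ B ∈ LG n, circ A B ^ 2 = A * B ^ 2 * A := by
    intro A hA B hB
    obtain ⟨⟨hP, -⟩, u, ⟨hu, -⟩, h⟩ := hcirc A hA B hB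
    exact hA.1.isHermitian.isSelfAdjoint.sq_eq_of_mul_eq_mul_unitary
      hB.1.isHermitian.isSelfAdjoint hP.isHermitian.isSelfAdjoint hu h
  intro A hA B hB
  have hA' := inv_mem_LG hA
  have hB' := inv_mem_LG hB
  refine (hcirc A hA B hB).1.1.inv.posSemidef.eq_of_sq_eq_sq
    (hcirc _ hA' _ hB').1.1.posSemidef ?_
  rw [circ_sq _ hA' _ hB', Matrix.inv_pow', circ_sq _ hA _ hB, Matrix.mul_inv_rev,
    Matrix.mul_inv_rev, ← Matrix.inv_pow', Matrix.mul_assoc]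
end

section
/- Let G be a group, Ω ≤ G a subgroup, and L ⊆ G a transversal of the left cosets G/Ω containing 1, with operation a ∘ b defined by ab ∈ (a ∘ b)Ω, a ∘ b ∈ L, making (L, ∘) a loop. If L generates G as a group and ωLω⁻¹ = L for the Ω-factors ω arising in products of elements of L, then the left multiplication group Mlt_ℓ(L, ∘) is a homomorphic image of G; in particular, if G is a simple group then Mlt_ℓ(L) ≅ G and (L, ∘) is a simple loop. -/
/-!
`G` acts on the left cosets of `Ω`, hence on the transversal `L`, and `a ∈ L` acts as the left
translation `λ_a` because `ab ∈ (a ∘ b)Ω`. Since `L` generates `G`, the image of this action is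
`Mlt_ℓ(L)`. If `G` is simple the action is faithful, as its kernel is normal and not all of `G`
(`L` contains `1` and some other element), so `Mlt_ℓ(L) ≅ G` is simple as well.

A normal subloop `N` splits `L` into the cosets `xN`, which the left translations permute. The
kernel of the action of the simple group `Mlt_ℓ(L)` on these cosets is `1` or everything. In the
first case every `λ_n` with `n ∈ N` is trivial, because `nx ∈ Nx = xN`, so `N = 1`; in the second
`a = λ_a 1 ∈ 1N` for every `a`, so `N = L`.
-/

def Setoid.permStabilizer {α : Type*} (s : Setoid α) : Subgroup (Equiv.Perm α) where
  carrier := {σ | ∀ x y, s x y ↔ s (σ x) (σ y)}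
  mul_mem' hσ hτ x y := (hτ x y).trans (hσ _ _)
  one_mem' _ _ := Iff.rfl
  inv_mem' {σ} hσ x y := by
    simpa only [Equiv.Perm.inv_def, Equiv.apply_symm_apply] using (hσ (σ⁻¹ x) (σ⁻¹ y)).symm

theorem SMulCon.mem_ker_toPermHom_iff {G α : Type*} [Group G] [MulAction G α]
    (c : SMulCon G α) (g : G) :
    g ∈ (MulAction.toPermHom G c.Quotient).ker ↔ ∀ x, c.toSetoid (g • x) x := by
  rw [MonoidHom.mem_ker, Equiv.Perm.ext_iff]
  exact Quotient.forall.trans (forall_congr' fun x => Quotient.eq)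

theorem MonoidHom.injective_of_surjective_of_isSimpleGroup {G H : Type*} [Group G] [Group H]
    [IsSimpleGroup G] [Nontrivial H] (f : G →* H) (hf : Function.Surjective f) :
    Function.Injective f := by
  refine f.normal_ker.eq_bot_or_eq_top.elim f.ker_eq_bot_iff.1 fun h => ?_
  obtain ⟨y, hy⟩ := exists_ne (1 : H)
  obtain ⟨x, rfl⟩ := hf y
  exact absurd (f.mem_ker.1 (h ▸ Subgroup.mem_top x)) hy

namespace LoopStr

variable {L : Type*} (S : LoopStr L)

@[simp]
theorem lam_apply (x y : L) : S.lam x y = S.mul x y := rfl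

theorem lam_one : S.lam S.one = 1 :=
  Equiv.ext S.one_mul

theorem lam_injective : Function.Injective S.lam := fun x y h => by
  simpa only [lam_apply, mul_one] using congrArg (· S.one) h

theorem mul_ldiv (a b : L) : S.mul a (S.ldiv a b) = b :=
  (S.lam a).apply_symm_apply b

theorem lam_mem_Mlt_s18 (x : L) : S.lam x ∈ S.Mlt :=
  Subgroup.subset_closure ⟨x, rfl⟩

theorem nontrivial_Mlt [Nontrivial L] : Nontrivial S.Mlt := by
  obtain ⟨x, hx⟩ := exists_ne S.one
  refine (Subgroup.nontrivial_iff_exists_ne_one _).2 ⟨S.lam x, S.lam_mem_Mlt_s18 x, ?_⟩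
  rw [← S.lam_one]
  exact S.lam_injective.ne hx

end LoopStr

namespace IsNormalSubloop

variable {L : Type*} {S : LoopStr L} {N : Set L}

theorem one_mem (hN : IsNormalSubloop S N) : S.one ∈ N := hN.1.1

theorem mul_mem (hN : IsNormalSubloop S N) {a b : L} (ha : a ∈ N) (hb : b ∈ N) :
    S.mul a b ∈ N :=
  hN.1.2.1 a ha b hb

theorem ldiv_mem (hN : IsNormalSubloop S N) {a b : L} (ha : a ∈ N) (hb : b ∈ N) :
    S.ldiv a b ∈ N :=
  hN.1.2.2.1 a ha b hb

theorem exists_mul_mul_eq (hN : IsNormalSubloop S N) (a b : L) {n : L} (hn : n ∈ N) :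
    ∃ m ∈ N, S.mul (S.mul a b) m = S.mul a (S.mul b n) := by
  have h : S.mul a (S.mul b n) ∈ (fun m => S.mul (S.mul a b) m) '' N := by
    rw [(hN.2 a b).1]; exact ⟨n, hn, rfl⟩
  exact h

theorem exists_mul_eq_mul_mul (hN : IsNormalSubloop S N) (a b : L) {m : L} (hm : m ∈ N) :
    ∃ n ∈ N, S.mul a (S.mul b n) = S.mul (S.mul a b) m := by
  have h : S.mul (S.mul a b) m ∈ (fun n => S.mul a (S.mul b n)) '' N := by
    rw [← (hN.2 a b).1]; exact ⟨m, hm, rfl⟩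
  exact h

theorem exists_mul_eq_mul (hN : IsNormalSubloop S N) (x : L) {n : L} (hn : n ∈ N) :
    ∃ m ∈ N, S.mul x m = S.mul n x := by
  have h : S.mul (S.mul S.one n) x ∈ (fun m => S.mul (S.mul S.one x) m) '' N := by
    rw [(hN.2 S.one x).2]; exact ⟨n, hn, rfl⟩
  simp only [S.one_mul] at h
  exact h

def cosetSetoid (hN : IsNormalSubloop S N) : Setoid L where
  r x y := ∃ n ∈ N, y = S.mul x n
  iseqv :=
  { refl x := ⟨S.one, hN.one_mem, (S.mul_one x).symm⟩
    symm := by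
      rintro x _ ⟨n, hn, rfl⟩
      obtain ⟨m, hm, e⟩ := hN.exists_mul_mul_eq x n (hN.ldiv_mem hn hN.one_mem)
      exact ⟨m, hm, by rw [e, S.mul_ldiv, S.mul_one]⟩
    trans := by
      rintro x _ _ ⟨n, hn, rfl⟩ ⟨m, hm, rfl⟩
      obtain ⟨k, hk, e⟩ := hN.exists_mul_eq_mul_mul x n hm
      exact ⟨S.mul n k, hN.mul_mem hn hk, e.symm⟩ }

theorem cosetSetoid_mul_left_iff (hN : IsNormalSubloop S N) (a x y : L) :
    hN.cosetSetoid (S.mul a x) (S.mul a y) ↔ hN.cosetSetoid x y := by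
  constructor
  · rintro ⟨m, hm, e⟩
    obtain ⟨n, hn, e'⟩ := hN.exists_mul_eq_mul_mul a x hm
    exact ⟨n, hn, (S.mul_left_bij a).1 (e.trans e'.symm)⟩
  · rintro ⟨n, hn, rfl⟩
    obtain ⟨m, hm, e⟩ := hN.exists_mul_mul_eq a x hn
    exact ⟨m, hm, e.symm⟩

theorem cosetSetoid_mul_left (hN : IsNormalSubloop S N) (x : L) {n : L} (hn : n ∈ N) :
    hN.cosetSetoid x (S.mul n x) := by
  obtain ⟨m, hm, e⟩ := hN.exists_mul_eq_mul x hn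
  exact ⟨m, hm, e.symm⟩

theorem cosetSetoid_one_iff (hN : IsNormalSubloop S N) (x : L) :
    hN.cosetSetoid S.one x ↔ x ∈ N := by
  show (∃ n ∈ N, x = S.mul S.one n) ↔ x ∈ N
  simp only [S.one_mul, exists_eq_right']

theorem Mlt_le_permStabilizer (hN : IsNormalSubloop S N) :
    S.Mlt ≤ hN.cosetSetoid.permStabilizer := by
  rw [LoopStr.Mlt, Subgroup.closure_le]
  rintro _ ⟨a, rfl⟩ x y
  exact (hN.cosetSetoid_mul_left_iff a x y).symm

def cosetCon (hN : IsNormalSubloop S N) : SMulCon S.Mlt L where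
  toSetoid := hN.cosetSetoid
  smul σ _ _ := (hN.Mlt_le_permStabilizer σ.2 _ _).1

theorem eq_singleton_one_or_eq_univ [IsSimpleGroup S.Mlt] (hN : IsNormalSubloop S N) :
    N = {S.one} ∨ N = Set.univ := by
  have hker := hN.cosetCon.mem_ker_toPermHom_iff
  rcases (MulAction.toPermHom S.Mlt hN.cosetCon.Quotient).normal_ker.eq_bot_or_eq_top with h | h
  · left
    refine Set.eq_singleton_iff_unique_mem.2 ⟨hN.one_mem, fun n hn => S.lam_injective ?_⟩
    have hlam := (hker ⟨S.lam n, S.lam_mem_Mlt_s18 n⟩).2 fun x =>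
      hN.cosetSetoid.symm' (hN.cosetSetoid_mul_left x hn)
    rw [h, Subgroup.mem_bot] at hlam
    rw [S.lam_one]
    exact congrArg Subtype.val hlam
  · right
    refine Set.eq_univ_of_forall fun a => (hN.cosetSetoid_one_iff a).1 ?_
    have hlam : hN.cosetSetoid (S.mul a S.one) S.one :=
      (hker ⟨S.lam a, S.lam_mem_Mlt_s18 a⟩).1 (h ▸ Subgroup.mem_top _) S.one
    rw [S.mul_one] at hlam
    exact hN.cosetSetoid.symm' hlam

end IsNormalSubloop

namespace Subgroup

variable {G : Type*} [Group G] {Ω : Subgroup G} {L : Set G}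

theorem nontrivial_of_one_mem_of_closure_eq_top [Nontrivial G] (h1 : (1 : G) ∈ L)
    (hgen : closure L = ⊤) : Nontrivial L := by
  obtain ⟨a, ha, ha1⟩ : ∃ a ∈ L, a ≠ 1 := by
    by_contra! h
    exact bot_ne_top (hgen ▸ (closure_eq_bot_iff.2 h).symm)
  exact ⟨⟨⟨a, ha⟩, ⟨1, h1⟩, fun h => ha1 (congrArg Subtype.val h)⟩⟩

theorem isComplement_of_existsUnique_eq_mul
    (h : ∀ g : G, ∃! a : G, a ∈ L ∧ ∃ ω ∈ Ω, g = a * ω) : IsComplement L Ω := by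
  refine isComplement_iff_existsUnique_inv_mul_mem.2 fun g => ?_
  obtain ⟨a, ⟨ha, ω, hω, rfl⟩, huniq⟩ := h g
  refine ⟨⟨a, ha⟩, by simpa using hω, fun b hb => Subtype.ext (huniq b ⟨b.2, _, hb, ?_⟩)⟩
  group

namespace IsComplement

noncomputable def transversalPermHom (hL : IsComplement L Ω) : G →* Equiv.Perm L :=
  hL.leftQuotientEquiv.permCongrHom.toMonoidHom.comp (MulAction.toPermHom G (G ⧸ Ω))

theorem transversalPermHom_apply_eq (hL : IsComplement L Ω) {g : G} {x y : L}
    (h : ((g * x : G) : G ⧸ Ω) = (y : G)) : hL.transversalPermHom g x = y := by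
  show hL.leftQuotientEquiv (g • (x : G ⧸ Ω)) = y
  exact (Equiv.eq_symm_apply _).1 h

theorem transversalPermHom_eq_lam (hL : IsComplement L Ω) (S : LoopStr L)
    (hmul : ∀ a b : L, ∃ ω ∈ Ω, (a : G) * (b : G) = (S.mul a b : G) * ω) (a : L) :
    hL.transversalPermHom a = S.lam a := by
  ext1 x
  refine hL.transversalPermHom_apply_eq (QuotientGroup.eq.2 ?_)
  obtain ⟨ω, hω, e⟩ := hmul a x
  simpa [e] using hω

theorem range_transversalPermHom (hL : IsComplement L Ω) (S : LoopStr L)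
    (hmul : ∀ a b : L, ∃ ω ∈ Ω, (a : G) * (b : G) = (S.mul a b : G) * ω)
    (hgen : closure L = ⊤) : hL.transversalPermHom.range = S.Mlt := by
  rw [MonoidHom.range_eq_map, ← hgen, MonoidHom.map_closure, Set.image_eq_range, LoopStr.Mlt]
  simp only [hL.transversalPermHom_eq_lam S hmul]

end IsComplement

end Subgroup

theorem stmt18_general {G : Type*} [Group G] (Ω : Subgroup G) (Lset : Set G)
    (h1 : (1 : G) ∈ Lset)
    (htrans : ∀ g : G, ∃! a : G, a ∈ Lset ∧ ∃ ω ∈ Ω, g = a * ω)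
    (S : LoopStr ↥Lset)
    (hmul : ∀ a b : ↥Lset, ∃ ω ∈ Ω, (a : G) * (b : G) = (S.mul a b : G) * ω)
    (hgen : Subgroup.closure Lset = ⊤) :
    (∃ Φ : G →* ↥S.Mlt, Function.Surjective Φ) ∧
    (IsSimpleGroup G →
      Nonempty (G ≃* ↥S.Mlt) ∧
      ∀ N : Set ↥Lset, IsNormalSubloop S N → N = {S.one} ∨ N = Set.univ) := by
  have hL := Subgroup.isComplement_of_existsUnique_eq_mul htrans
  have hrange := hL.range_transversalPermHom S hmul hgen
  let Φ := (MulEquiv.subgroupCongr hrange).toMonoidHom.comp hL.transversalPermHom.rangeRestrict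
  have hΦ : Function.Surjective Φ :=
    (MulEquiv.subgroupCongr hrange).surjective.comp hL.transversalPermHom.rangeRestrict_surjective
  refine ⟨⟨Φ, hΦ⟩, fun _ => ?_⟩
  have := Subgroup.nontrivial_of_one_mem_of_closure_eq_top h1 hgen
  have := S.nontrivial_Mlt
  let e := MulEquiv.ofBijective Φ ⟨Φ.injective_of_surjective_of_isSimpleGroup hΦ, hΦ⟩
  have := e.symm.isSimpleGroup
  exact ⟨⟨e⟩, fun N hN => hN.eq_singleton_one_or_eq_univ⟩

/-- Let `Ω ≤ G`, and let `L ⊆ G` be a transversal of `G/Ω`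
containing `1`, with loop operation `a ∘ b` determined by `ab ∈ (a ∘ b)Ω`.
If `L` generates `G` and conjugation by the `Ω`-factors arising in products of
elements of `L` preserves `L`, then `Mlt_ℓ(L, ∘)` is a homomorphic image of
`G`; in particular if `G` is simple then `Mlt_ℓ(L) ≅ G` and `(L, ∘)` is a
simple loop. -/
theorem stmt18 {G : Type*} [Group G] (Ω : Subgroup G) (Lset : Set G)
    (h1 : (1 : G) ∈ Lset)
    (htrans : ∀ g : G, ∃! a : G, a ∈ Lset ∧ ∃ ω ∈ Ω, g = a * ω)
    (S : LoopStr ↥Lset) (hone : (S.one : G) = 1)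
    (hmul : ∀ a b : ↥Lset, ∃ ω ∈ Ω, (a : G) * (b : G) = (S.mul a b : G) * ω)
    (hgen : Subgroup.closure Lset = ⊤)
    (hconj : ∀ a b : ↥Lset, ∀ ω ∈ Ω,
      (a : G) * (b : G) = (S.mul a b : G) * ω → ∀ x ∈ Lset, ω * x * ω⁻¹ ∈ Lset) :
    (∃ Φ : G →* ↥S.Mlt, Function.Surjective Φ) ∧
    (IsSimpleGroup G →
      Nonempty (G ≃* ↥S.Mlt) ∧
      ∀ N : Set ↥Lset, IsNormalSubloop S N → N = {S.one} ∨ N = Set.univ) :=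
  stmt18_general Ω Lset h1 htrans S hmul hgen
end
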